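/- Fix a constant a > 0. Let v = (x,y,z,κ) and v' = (x',y',z',κ') be points in R^4 with |v − v'| ≤ ε (Euclidean norm), all coordinates of v, v' and of w = (w1,w2,w3) lying in [0,1] except κ, κ' ∈ [−1,1]. Suppose that for every point u = (x_u, y_u, z_u, κ_u) on the segment from v to v' we have |(w1−x_u) + κ_u(w2−y_u)| ≥ a and (w1−x_u)^2 + (w2−y_u)^2 ≥ a. Then |F(v;w) − F(v';w)| ≤ βε and |G(v;w) − G(v';w)| ≤ βε, where F(v;w) = ((w2−y) − κ(w1−x))/((w1−x) + κ(w2−y)), G(v;w) = (w3−z)/sqrt((w1−x)^2+(w2−y)^2), and β is a constant depending only on a (e.g. β = 10/a^2 works). -/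

import Mathlib

private lemma abs_mul_le' {p q P Q : ℝ} (hp : |p| ≤ P) (hq : |q| ≤ Q) : |p * q| ≤ P * Q := by
  rw [abs_mul]
  exact mul_le_mul hp hq (abs_nonneg _) ((abs_nonneg p).trans hp)

set_option maxHeartbeats 1000000 in
/-- Lemma 1 (core): under nondegeneracy conditions along the segment from v to v',
the projection maps F and G change by at most βε when the pose moves by ε,
where β depends only on a. -/
theorem stmt_3 (a : ℝ) (ha : 0 < a) :
    ∃ β : ℝ, 0 < β ∧
      ∀ w1 w2 w3 x y z κ x' y' z' κ' ε : ℝ,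
        ε ≥ 0 →
        w1 ∈ Set.Icc (0:ℝ) 1 → w2 ∈ Set.Icc (0:ℝ) 1 → w3 ∈ Set.Icc (0:ℝ) 1 →
        x ∈ Set.Icc (0:ℝ) 1 → y ∈ Set.Icc (0:ℝ) 1 → z ∈ Set.Icc (0:ℝ) 1 →
        x' ∈ Set.Icc (0:ℝ) 1 → y' ∈ Set.Icc (0:ℝ) 1 → z' ∈ Set.Icc (0:ℝ) 1 →
        κ ∈ Set.Icc (-1:ℝ) 1 → κ' ∈ Set.Icc (-1:ℝ) 1 →
        Real.sqrt ((x - x')^2 + (y - y')^2 + (z - z')^2 + (κ - κ')^2) ≤ ε →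
        (∀ θ ∈ Set.Icc (0:ℝ) 1,
          |(w1 - (x + θ * (x' - x))) + (κ + θ * (κ' - κ)) * (w2 - (y + θ * (y' - y)))| ≥ a ∧
          (w1 - (x + θ * (x' - x)))^2 + (w2 - (y + θ * (y' - y)))^2 ≥ a) →
        |((w2 - y) - κ * (w1 - x)) / ((w1 - x) + κ * (w2 - y)) -
          ((w2 - y') - κ' * (w1 - x')) / ((w1 - x') + κ' * (w2 - y'))| ≤ β * ε ∧
        |(w3 - z) / Real.sqrt ((w1 - x)^2 + (w2 - y)^2) -
          (w3 - z') / Real.sqrt ((w1 - x')^2 + (w2 - y')^2)| ≤ β * ε := by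
  have hsa : 0 < Real.sqrt a := Real.sqrt_pos.mpr ha
  refine ⟨12 / a ^ 2 + 2 / a + 2 / (a * Real.sqrt a), by positivity, ?_⟩
  intro w1 w2 w3 x y z κ x' y' z' κ' ε hε hw1 hw2 hw3 hx hy hz hx' hy' hz' hκ hκ' hdist hseg
  set β : ℝ := 12 / a ^ 2 + 2 / a + 2 / (a * Real.sqrt a) with hβ
  -- endpoint nondegeneracy
  obtain ⟨h0a, h0b⟩ := hseg 0 (by norm_num)
  obtain ⟨h1a, h1b⟩ := hseg 1 (by norm_num)
  rw [show x + 0 * (x' - x) = x by ring, show y + 0 * (y' - y) = y by ring,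
    show κ + 0 * (κ' - κ) = κ by ring] at h0a
  rw [show x + 0 * (x' - x) = x by ring, show y + 0 * (y' - y) = y by ring] at h0b
  rw [show x + 1 * (x' - x) = x' by ring, show y + 1 * (y' - y) = y' by ring,
    show κ + 1 * (κ' - κ) = κ' by ring] at h1a
  rw [show x + 1 * (x' - x) = x' by ring, show y + 1 * (y' - y) = y' by ring] at h1b
  -- coordinate-wise distance bounds
  have hsum : ∀ d : ℝ, d ^ 2 ≤ (x - x')^2 + (y - y')^2 + (z - z')^2 + (κ - κ')^2 → |d| ≤ ε := by
    intro d hd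
    calc |d| = Real.sqrt (d ^ 2) := (Real.sqrt_sq_eq_abs d).symm
      _ ≤ Real.sqrt ((x - x')^2 + (y - y')^2 + (z - z')^2 + (κ - κ')^2) := Real.sqrt_le_sqrt hd
      _ ≤ ε := hdist
  have hxx : |x - x'| ≤ ε := hsum _ (by nlinarith [sq_nonneg (y - y'), sq_nonneg (z - z'), sq_nonneg (κ - κ')])
  have hyy : |y - y'| ≤ ε := hsum _ (by nlinarith [sq_nonneg (x - x'), sq_nonneg (z - z'), sq_nonneg (κ - κ')])
  have hzz : |z - z'| ≤ ε := hsum _ (by nlinarith [sq_nonneg (x - x'), sq_nonneg (y - y'), sq_nonneg (κ - κ')])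
  have hκκ : |κ - κ'| ≤ ε := hsum _ (by nlinarith [sq_nonneg (x - x'), sq_nonneg (y - y'), sq_nonneg (z - z')])
  -- basic interval bounds
  have hw1x : |w1 - x| ≤ 1 := abs_le.mpr ⟨by linarith [hw1.1, hx.2], by linarith [hw1.2, hx.1]⟩
  have hw1x' : |w1 - x'| ≤ 1 := abs_le.mpr ⟨by linarith [hw1.1, hx'.2], by linarith [hw1.2, hx'.1]⟩
  have hw2y : |w2 - y| ≤ 1 := abs_le.mpr ⟨by linarith [hw2.1, hy.2], by linarith [hw2.2, hy.1]⟩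
  have hw2y' : |w2 - y'| ≤ 1 := abs_le.mpr ⟨by linarith [hw2.1, hy'.2], by linarith [hw2.2, hy'.1]⟩
  have hw3z' : |w3 - z'| ≤ 1 := abs_le.mpr ⟨by linarith [hw3.1, hz'.2], by linarith [hw3.2, hz'.1]⟩
  have hκ1 : |κ| ≤ 1 := abs_le.mpr ⟨hκ.1, hκ.2⟩
  have hκ'1 : |κ'| ≤ 1 := abs_le.mpr ⟨hκ'.1, hκ'.2⟩
  constructor
  · -- F part
    set N : ℝ := (w2 - y) - κ * (w1 - x) with hN
    set D : ℝ := (w1 - x) + κ * (w2 - y) with hD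
    set N' : ℝ := (w2 - y') - κ' * (w1 - x') with hN'
    set D' : ℝ := (w1 - x') + κ' * (w2 - y') with hD'
    have haD : a ≤ |D| := h0a
    have haD' : a ≤ |D'| := h1a
    have hDne : D ≠ 0 := by
      intro h; rw [h, abs_zero] at haD; linarith
    have hD'ne : D' ≠ 0 := by
      intro h; rw [h, abs_zero] at haD'; linarith
    have hNb' : |N'| ≤ 2 := by
      calc |N'| ≤ |w2 - y'| + |κ' * (w1 - x')| := by rw [hN']; exact abs_sub _ _
        _ ≤ 1 + 1 * 1 := add_le_add hw2y' (abs_mul_le' hκ'1 hw1x')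
        _ = 2 := by norm_num
    have hDb' : |D'| ≤ 2 := by
      calc |D'| ≤ |w1 - x'| + |κ' * (w2 - y')| := by rw [hD']; exact abs_add_le _ _
        _ ≤ 1 + 1 * 1 := add_le_add hw1x' (abs_mul_le' hκ'1 hw2y')
        _ = 2 := by norm_num
    have hNN' : |N - N'| ≤ 3 * ε := by
      have e : N - N' = (y' - y) + (-((κ - κ') * (w1 - x)) + κ' * (x - x')) := by
        rw [hN, hN']; ring
      calc |N - N'| ≤ |y' - y| + |-((κ - κ') * (w1 - x)) + κ' * (x - x')| := by
            rw [e]; exact abs_add_le _ _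
        _ ≤ |y' - y| + (|(κ - κ') * (w1 - x)| + |κ' * (x - x')|) := by
            refine add_le_add_right ?_ _
            calc |-((κ - κ') * (w1 - x)) + κ' * (x - x')|
                ≤ |-((κ - κ') * (w1 - x))| + |κ' * (x - x')| := abs_add_le _ _
              _ = |(κ - κ') * (w1 - x)| + |κ' * (x - x')| := by rw [abs_neg]
        _ ≤ ε + (ε * 1 + 1 * ε) := by
            refine add_le_add (by rw [abs_sub_comm]; exact hyy) (add_le_add ?_ ?_)
            · exact abs_mul_le' hκκ hw1x
            · exact abs_mul_le' hκ'1 hxx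
        _ ≤ 3 * ε := by linarith
    have hDD' : |D' - D| ≤ 3 * ε := by
      have e : D' - D = (x - x') + ((κ' - κ) * (w2 - y') + κ * (y - y')) := by
        rw [hD, hD']; ring
      calc |D' - D| ≤ |x - x'| + |(κ' - κ) * (w2 - y') + κ * (y - y')| := by
            rw [e]; exact abs_add_le _ _
        _ ≤ |x - x'| + (|(κ' - κ) * (w2 - y')| + |κ * (y - y')|) :=
            add_le_add_right (abs_add_le _ _) _
        _ ≤ ε + (ε * 1 + 1 * ε) := by
            refine add_le_add hxx (add_le_add ?_ ?_)
            · exact abs_mul_le' (by rw [abs_sub_comm]; exact hκκ) hw2y'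
            · exact abs_mul_le' hκ1 hyy
        _ ≤ 3 * ε := by linarith
    have hnum : |N * D' - D * N'| ≤ 12 * ε := by
      calc |N * D' - D * N'| = |(N - N') * D' + N' * (D' - D)| := by congr 1; ring
        _ ≤ |(N - N') * D'| + |N' * (D' - D)| := abs_add_le _ _
        _ ≤ 3 * ε * 2 + 2 * (3 * ε) := add_le_add (abs_mul_le' hNN' hDb') (abs_mul_le' hNb' hDD')
        _ = 12 * ε := by ring
    rw [div_sub_div _ _ hDne hD'ne, abs_div, abs_mul]
    have hden : a * a ≤ |D| * |D'| := mul_le_mul haD haD' ha.le (abs_nonneg _)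
    calc |N * D' - D * N'| / (|D| * |D'|) ≤ (12 * ε) / (a * a) :=
          div_le_div₀ (by positivity) hnum (by positivity) hden
      _ ≤ β * ε := by
          rw [hβ]
          have h1 : (12 * ε) / (a * a) = 12 / a ^ 2 * ε := by
            rw [pow_two]; ring
          have h2 : 0 ≤ (2 / a + 2 / (a * Real.sqrt a)) * ε := by positivity
          have h3 : (12 / a ^ 2 + 2 / a + 2 / (a * Real.sqrt a)) * ε
              = 12 / a ^ 2 * ε + (2 / a + 2 / (a * Real.sqrt a)) * ε := by ring
          rw [h1, h3]; linarith
  · -- G part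
    set S : ℝ := (w1 - x)^2 + (w2 - y)^2 with hS
    set S' : ℝ := (w1 - x')^2 + (w2 - y')^2 with hS'
    set s : ℝ := Real.sqrt S with hs
    set s' : ℝ := Real.sqrt S' with hs'
    have hSpos : (0:ℝ) < S := lt_of_lt_of_le ha h0b
    have hS'pos : (0:ℝ) < S' := lt_of_lt_of_le ha h1b
    have hsa' : Real.sqrt a ≤ s := Real.sqrt_le_sqrt h0b
    have hsa'' : Real.sqrt a ≤ s' := Real.sqrt_le_sqrt h1b
    have hspos : 0 < s := lt_of_lt_of_le hsa hsa'
    have hs'pos : 0 < s' := lt_of_lt_of_le hsa hsa''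
    have hsq : s ^ 2 = S := Real.sq_sqrt hSpos.le
    have hsq' : s' ^ 2 = S' := Real.sq_sqrt hS'pos.le
    have hs'le : s' ≤ 2 := by
      have : S' ≤ 4 := by
        have h1 := abs_le.mp hw1x'
        have h2 := abs_le.mp hw2y'
        rw [hS']
        nlinarith [h1.1, h1.2, h2.1, h2.2]
      calc s' = Real.sqrt S' := hs'
        _ ≤ Real.sqrt 4 := Real.sqrt_le_sqrt this
        _ = 2 := by
            rw [show (4:ℝ) = 2 ^ 2 by norm_num, Real.sqrt_sq (by norm_num)]
    -- bound |s' - s|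
    have hSS' : |S' - S| ≤ 4 * ε := by
      have e : S' - S = (x - x') * ((w1 - x) + (w1 - x')) + (y - y') * ((w2 - y) + (w2 - y')) := by
        rw [hS, hS']; ring
      calc |S' - S| ≤ |(x - x') * ((w1 - x) + (w1 - x'))| + |(y - y') * ((w2 - y) + (w2 - y'))| := by
            rw [e]; exact abs_add_le _ _
        _ ≤ ε * 2 + ε * 2 := by
            refine add_le_add (abs_mul_le' hxx ?_) (abs_mul_le' hyy ?_)
            · calc |(w1 - x) + (w1 - x')| ≤ |w1 - x| + |w1 - x'| := abs_add_le _ _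
                _ ≤ 2 := by linarith
            · calc |(w2 - y) + (w2 - y')| ≤ |w2 - y| + |w2 - y'| := abs_add_le _ _
                _ ≤ 2 := by linarith
        _ = 4 * ε := by ring
    have hss' : |s' - s| ≤ 2 * ε / Real.sqrt a := by
      have hsum2 : 2 * Real.sqrt a ≤ s + s' := by linarith
      have hsum2pos : 0 < s + s' := by linarith
      have key : |s' - s| * (s + s') = |S' - S| := by
        rw [← abs_of_pos hsum2pos, ← abs_mul]
        congr 1
        have e2 : (s' - s) * (s + s') = s' ^ 2 - s ^ 2 := by ring
        rw [e2, hsq, hsq']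
      have : |s' - s| = |S' - S| / (s + s') := by
        field_simp [hsum2pos.ne'] at key ⊢
        linarith [key]
      rw [this]
      calc |S' - S| / (s + s') ≤ (4 * ε) / (2 * Real.sqrt a) :=
            div_le_div₀ (by positivity) hSS' (by positivity) hsum2
        _ = 2 * ε / Real.sqrt a := by
            rw [div_eq_div_iff (by positivity) (by positivity)]; ring
    have hsne : s ≠ 0 := hspos.ne'
    have hs'ne : s' ≠ 0 := hs'pos.ne'
    have hnum : |(w3 - z) * s' - s * (w3 - z')| ≤ 2 * ε + 2 * ε / Real.sqrt a := by
      calc |(w3 - z) * s' - s * (w3 - z')| = |(z' - z) * s' + (w3 - z') * (s' - s)| := by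
            congr 1; ring
        _ ≤ |(z' - z) * s'| + |(w3 - z') * (s' - s)| := abs_add_le _ _
        _ ≤ ε * 2 + 1 * (2 * ε / Real.sqrt a) := by
            have hs'le2 : |s'| ≤ 2 := by rwa [abs_of_pos hs'pos]
            refine add_le_add (abs_mul_le' ?_ hs'le2) (abs_mul_le' hw3z' hss')
            rw [abs_sub_comm]; exact hzz
        _ = 2 * ε + 2 * ε / Real.sqrt a := by ring
    rw [div_sub_div _ _ hsne hs'ne, abs_div, abs_mul]
    have hden : a ≤ |s| * |s'| := by
      rw [abs_of_pos hspos, abs_of_pos hs'pos]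
      calc a = Real.sqrt a * Real.sqrt a := (Real.mul_self_sqrt ha.le).symm
        _ ≤ s * s' := mul_le_mul hsa' hsa'' hsa.le hspos.le
    calc |(w3 - z) * s' - s * (w3 - z')| / (|s| * |s'|)
        ≤ (2 * ε + 2 * ε / Real.sqrt a) / a :=
          div_le_div₀ (by positivity) hnum ha hden
      _ ≤ β * ε := by
          rw [hβ]
          have h1 : (2 * ε + 2 * ε / Real.sqrt a) / a
              = (2 / a) * ε + (2 / (a * Real.sqrt a)) * ε := by
            rw [add_div, div_div, mul_comm (Real.sqrt a) a]; ring
          have h2 : 0 ≤ (12 / a ^ 2) * ε := by positivity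
          have h3 : (12 / a ^ 2 + 2 / a + 2 / (a * Real.sqrt a)) * ε
              = (2 / a) * ε + (2 / (a * Real.sqrt a)) * ε + 12 / a ^ 2 * ε := by ring
          rw [h1, h3]; linarith
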